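/- arXiv:2602.07203 — 2 statements merged into one kernel-verified Lean document; each statement's English description precedes it below -/
import Mathlib

section
/- Let S̄ ⊊ {1,…,d} be a closed set. Then there exists j ∈ {1,…,d} ∖ S̄ such that S̄ ∪ {j} is closed and j belongs to the basis of S̄ ∪ {j}, i.e. ⌈S̄ ∪ {j}⌉ = S̄ ∪ {j} and j ∈ ⌊S̄ ∪ {j}⌋. -/
/-- Vertex type: `some i` is the feature vertex `i`, `none` is the target vertex `Y`. -/
abbrev Vtx (d : ℕ) := Option (Fin d)

/-- `PathTo E j p` means `p` is a directed path in the graph with edge relation `E`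
from the feature vertex `j` to the target vertex `Y` (encoded as `none`). -/
def PathTo {d : ℕ} (E : Vtx d → Vtx d → Prop) (j : Fin d) (p : List (Vtx d)) : Prop :=
  p.Chain' E ∧ p.head? = some (some j) ∧ p.getLast? = some none

open Classical in
/-- The basis `⌊S⌋` of `S`: all `j ∈ S` having a directed path to `Y`
whose only vertex in `S` is `j`. -/
noncomputable def bas {d : ℕ} (E : Vtx d → Vtx d → Prop) (S : Finset (Fin d)) :
    Finset (Fin d) :=
  S.filter fun j => ∃ p : List (Vtx d), PathTo E j p ∧ ∀ i ∈ S, some i ∈ p → i = j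

open Classical in
/-- The closure `⌈S⌉` of `S`: all `j ∈ {1,…,d}` such that every directed path
from `j` to `Y` contains a vertex of `S`. -/
noncomputable def clos {d : ℕ} (E : Vtx d → Vtx d → Prop) (S : Finset (Fin d)) :
    Finset (Fin d) :=
  Finset.univ.filter fun j => ∀ p : List (Vtx d), PathTo E j p → ∃ i ∈ S, some i ∈ p

/-!
Every feature outside the closed set `S` has a path to `Y` avoiding `S`. Choose `j ∉ S` whose
shortest `S`-avoiding path is as long as possible. A shortest `S`-avoiding path from any other
`i ∉ S` cannot pass through `j`, since its tail from `j` would be a strictly shorter `S`-avoiding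
path from `j`; so it avoids `insert j S`, which is therefore closed. The shortest `S`-avoiding
path from `j` meets `insert j S` only in `j`, so `j` lies in the basis.
-/

variable {d : ℕ} {E : Vtx d → Vtx d → Prop}

theorem PathTo.head_mem {j : Fin d} {p : List (Vtx d)} (hp : PathTo E j p) : some j ∈ p :=
  List.mem_of_mem_head? hp.2.1

theorem PathTo.of_append {i x : Fin d} {s t : List (Vtx d)}
    (hp : PathTo E i (s ++ some x :: t)) : PathTo E x (some x :: t) := by
  refine ⟨hp.1.right_of_append, rfl, ?_⟩
  have hlast := hp.2.2
  rwa [List.getLast?_append_of_ne_nil _ (List.cons_ne_nil _ _)] at hlast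

theorem mem_clos_iff {S : Finset (Fin d)} {j : Fin d} :
    j ∈ clos E S ↔ ∀ p, PathTo E j p → ∃ i ∈ S, some i ∈ p := by
  simp [clos]

theorem subset_clos (S : Finset (Fin d)) : S ⊆ clos E S :=
  fun j hj => mem_clos_iff.mpr fun _ hp => ⟨j, hj, hp.head_mem⟩

def IsAvoidingPath (E : Vtx d → Vtx d → Prop) (S : Finset (Fin d)) (j : Fin d)
    (p : List (Vtx d)) : Prop :=
  PathTo E j p ∧ ∀ i ∈ S, some i ∉ p

theorem notMem_clos_iff_exists_isAvoidingPath {S : Finset (Fin d)} {j : Fin d} :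
    j ∉ clos E S ↔ ∃ p, IsAvoidingPath E S j p := by
  simp only [mem_clos_iff, IsAvoidingPath]
  push Not
  rfl

/-- The length of a shortest path from `j` to `Y` avoiding `S` (`0` if there is none). -/
noncomputable def avoidingDist (E : Vtx d → Vtx d → Prop) (S : Finset (Fin d)) (j : Fin d) :
    ℕ :=
  sInf {n | ∃ p, IsAvoidingPath E S j p ∧ p.length = n}

theorem avoidingDist_le {S : Finset (Fin d)} {j : Fin d} {p : List (Vtx d)}
    (hp : IsAvoidingPath E S j p) : avoidingDist E S j ≤ p.length :=
  Nat.sInf_le ⟨p, hp, rfl⟩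

theorem exists_isAvoidingPath_length_eq {S : Finset (Fin d)} {j : Fin d} (hj : j ∉ clos E S) :
    ∃ p, IsAvoidingPath E S j p ∧ p.length = avoidingDist E S j := by
  obtain ⟨p, hp⟩ := notMem_clos_iff_exists_isAvoidingPath.mp hj
  exact Nat.sInf_mem (s := {n | ∃ p, IsAvoidingPath E S j p ∧ p.length = n})
    ⟨p.length, p, hp, rfl⟩

theorem avoidingDist_lt_of_mem {S : Finset (Fin d)} {i j : Fin d} {p : List (Vtx d)}
    (hp : IsAvoidingPath E S i p) (hlen : p.length = avoidingDist E S i)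
    (hj : some j ∈ p) (hji : j ≠ i) : avoidingDist E S j < avoidingDist E S i := by
  obtain ⟨s, t, rfl⟩ := List.append_of_mem hj
  have hs : s ≠ [] := by
    rintro rfl
    exact hji (by simpa using hp.1.2.1)
  have htail : IsAvoidingPath E S j (some j :: t) :=
    ⟨hp.1.of_append, fun k hk hkt => hp.2 k hk (List.mem_append_right s hkt)⟩
  have hs_pos := List.length_pos_iff.mpr hs
  calc avoidingDist E S j ≤ (some j :: t).length := avoidingDist_le htail
    _ < (s ++ some j :: t).length := by simp only [List.length_append]; omega
    _ = avoidingDist E S i := hlen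

theorem clos_insert_eq_of_forall_avoidingDist_le {S : Finset (Fin d)} (hS : clos E S ⊆ S)
    {j : Fin d} (hmax : ∀ i ∉ S, avoidingDist E S i ≤ avoidingDist E S j) :
    clos E (insert j S) = insert j S := by
  refine Finset.Subset.antisymm (fun i hi => ?_) (subset_clos _)
  by_contra hiS
  have hiS' : i ∉ S := fun h => hiS (Finset.mem_insert_of_mem h)
  obtain ⟨q, hq, hqlen⟩ := exists_isAvoidingPath_length_eq (fun h => hiS' (hS h))
  obtain ⟨k, hk, hkq⟩ := mem_clos_iff.mp hi q hq.1
  rcases Finset.mem_insert.mp hk with rfl | hkS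
  · have hki : k ≠ i := fun h => hiS (h ▸ Finset.mem_insert_self k S)
    exact (avoidingDist_lt_of_mem hq hqlen hkq hki).not_ge (hmax i hiS')
  · exact hq.2 k hkS hkq

theorem mem_bas_insert_of_notMem_clos {S : Finset (Fin d)} {j : Fin d} (hj : j ∉ clos E S) :
    j ∈ bas E (insert j S) := by
  obtain ⟨p, hp⟩ := notMem_clos_iff_exists_isAvoidingPath.mp hj
  simp only [bas, Finset.mem_filter, Finset.mem_insert_self, true_and]
  refine ⟨p, hp.1, fun i hi hip => ?_⟩
  rcases Finset.mem_insert.mp hi with rfl | hiS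
  · rfl
  · exact absurd hip (hp.2 i hiS)

theorem stmt1_general (d : ℕ) (E : Vtx d → Vtx d → Prop)
    (S : Finset (Fin d)) (hclosed : clos E S = S)
    (hproper : S ⊂ Finset.univ) :
    ∃ j : Fin d, j ∉ S ∧ clos E (insert j S) = insert j S ∧ j ∈ bas E (insert j S) := by
  have hcompl : Sᶜ.Nonempty :=
    (Finset.exists_of_ssubset hproper).imp fun _ h => Finset.mem_compl.mpr h.2
  obtain ⟨j, hjS, hmax⟩ := Finset.exists_max_image Sᶜ (avoidingDist E S) hcompl
  rw [Finset.mem_compl] at hjS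
  refine ⟨j, hjS, ?_, ?_⟩
  · exact clos_insert_eq_of_forall_avoidingDist_le hclosed.le
      fun i hi => hmax i (Finset.mem_compl.mpr hi)
  · exact mem_bas_insert_of_notMem_clos (by rwa [hclosed])

/-- Lemma 1(2): a proper closed set can be extended by one element to a closed set,
the added element belonging to the basis of the extension. -/
theorem stmt1 (d : ℕ) (E : Vtx d → Vtx d → Prop)
    (hacyc : ∀ v : Vtx d, ¬ Relation.TransGen E v v)
    (hY : ∀ v : Vtx d, ¬ E none v)
    (S : Finset (Fin d)) (hclosed : clos E S = S)
    (hproper : S ⊂ Finset.univ) :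
    ∃ j : Fin d, j ∉ S ∧ clos E (insert j S) = insert j S ∧ j ∈ bas E (insert j S) :=
  stmt1_general d E S hclosed hproper
end

section
/- Let U ⊆ {1,…,d} be irreducible. Then for every T ⊆ {1,…,d}, one has ⌊T⌋ = U if and only if U ⊆ T ⊆ ⌈U⌉. Consequently, the intervals { T : U ⊆ T ⊆ ⌈U⌉ }, where U ranges over the irreducible subsets of {1,…,d}, form a partition of the powerset of {1,…,d}. -/
lemma chain_transGen {α} {R : α → α → Prop} {a b : α} {l : List α}
    (h : List.Chain R a l) (hb : b ∈ l) : Relation.TransGen R a b := by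
  induction l generalizing a with
  | nil => simp at hb
  | cons c l ih =>
    have hac := (List.isChain_cons_cons.1 h).1
    have hc := (List.isChain_cons_cons.1 h).2
    rcases List.mem_cons.1 hb with rfl | hb
    · exact Relation.TransGen.single hac
    · exact Relation.TransGen.head hac (ih hc hb)

lemma suffix_path {d} {E : Vtx d → Vtx d → Prop} {p q : List (Vtx d)} {i : Fin d}
    (hc : p.Chain' E) (hl : p.getLast? = some none) (hq : (some i :: q) <:+ p) :
    PathTo E i (some i :: q) := by
  refine ⟨hc.suffix hq, rfl, ?_⟩
  obtain ⟨t, rfl⟩ := hq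
  rwa [List.getLast?_append_of_ne_nil _ (List.cons_ne_nil _ _)] at hl

lemma path_cons {d} {E : Vtx d → Vtx d → Prop} {j : Fin d} {p : List (Vtx d)}
    (hp : PathTo E j p) : ∃ rest, p = some j :: rest := by
  cases p with
  | nil => simp [PathTo] at hp
  | cons a l =>
    obtain ⟨-, h, -⟩ := hp
    simp only [List.head?_cons, Option.some.injEq] at h
    exact ⟨l, by rw [h]⟩

lemma exists_bas_mem {d} (E : Vtx d → Vtx d → Prop) (T : Finset (Fin d)) :
    ∀ p : List (Vtx d), ∀ j : Fin d, j ∈ T → PathTo E j p →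
      ∃ i ∈ bas E T, some i ∈ p := by
  classical
  suffices h : ∀ n, ∀ p : List (Vtx d), p.length ≤ n → ∀ j : Fin d, j ∈ T → PathTo E j p →
      ∃ i ∈ bas E T, some i ∈ p from fun p => h p.length p le_rfl
  intro n
  induction n with
  | zero =>
    intro p hn j hj hp
    obtain ⟨rest, rfl⟩ := path_cons hp
    simp at hn
  | succ n ih =>
    intro p hn j hj hp
    obtain ⟨rest, rfl⟩ := path_cons hp
    by_cases hT : ∃ i ∈ T, some i ∈ rest
    · obtain ⟨i, hiT, hir⟩ := hT
      obtain ⟨s, t, rfl⟩ := List.append_of_mem hir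
      have hsuf : (some i :: t) <:+ some j :: (s ++ some i :: t) :=
        ⟨some j :: s, by simp⟩
      have hq : PathTo E i (some i :: t) := suffix_path hp.1 hp.2.2 hsuf
      have hlen : (some i :: t).length ≤ n := by
        simp only [List.length_cons, List.length_append] at hn ⊢
        omega
      obtain ⟨u, hu, hup⟩ := ih _ hlen i hiT hq
      exact ⟨u, hu, hsuf.subset hup⟩
    · refine ⟨j, ?_, List.mem_cons_self⟩
      refine Finset.mem_filter.2 ⟨hj, some j :: rest, hp, fun i hiT hip => ?_⟩
      rcases List.mem_cons.1 hip with h | h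
      · exact Option.some_injective _ h
      · exact absurd ⟨i, hiT, h⟩ hT

/-- For irreducible `U`, `⌊T⌋ = U ↔ U ⊆ T ⊆ ⌈U⌉`; consequently the intervals
`[U, ⌈U⌉]` over irreducible `U` partition the powerset. -/
theorem stmt5 (d : ℕ) (E : Vtx d → Vtx d → Prop)
    (hacyc : ∀ v : Vtx d, ¬ Relation.TransGen E v v)
    (hY : ∀ v : Vtx d, ¬ E none v) :
    (∀ U : Finset (Fin d), bas E U = U →
      ∀ T : Finset (Fin d), (bas E T = U ↔ U ⊆ T ∧ T ⊆ clos E U)) ∧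
    (∀ T : Finset (Fin d), ∃! U : Finset (Fin d),
      bas E U = U ∧ U ⊆ T ∧ T ⊆ clos E U) := by
  classical
  have part1 : ∀ U : Finset (Fin d), bas E U = U →
      ∀ T : Finset (Fin d), (bas E T = U ↔ U ⊆ T ∧ T ⊆ clos E U) := by
    intro U hU T
    constructor
    · rintro rfl
      refine ⟨Finset.filter_subset _ _, fun j hjT => ?_⟩
      refine Finset.mem_filter.2 ⟨Finset.mem_univ _, fun p hp => ?_⟩
      exact exists_bas_mem E T p j hjT hp
    · rintro ⟨hUT, hTc⟩
      apply Finset.Subset.antisymm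
      · intro j hj
        obtain ⟨hjT, p, hp, honly⟩ := Finset.mem_filter.1 hj
        obtain ⟨u, hu, hup⟩ :=
          (Finset.mem_filter.1 (hTc hjT)).2 p hp
        exact (honly u (hUT hu) hup) ▸ hu
      · intro j hjU
        have hjU' : j ∈ U := hjU
        rw [← hU] at hjU
        obtain ⟨-, p, hp, honlyU⟩ := Finset.mem_filter.1 hjU
        refine Finset.mem_filter.2 ⟨hUT hjU', p, hp, fun i hiT hip => ?_⟩
        obtain ⟨rest, rfl⟩ := path_cons hp
        by_contra hij
        have hir : some i ∈ rest := by
          rcases List.mem_cons.1 hip with h | h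
          · exact absurd (Option.some_injective _ h) hij
          · exact h
        obtain ⟨s, t, rfl⟩ := List.append_of_mem hir
        have hsuf : (some i :: t) <:+ some j :: (s ++ some i :: t) :=
          ⟨some j :: s, by simp⟩
        have hq : PathTo E i (some i :: t) := suffix_path hp.1 hp.2.2 hsuf
        obtain ⟨u, hu, huq⟩ := (Finset.mem_filter.1 (hTc hiT)).2 _ hq
        have huj : u = j := honlyU u hu (hsuf.subset huq)
        subst huj
        have : some u ∈ s ++ some i :: t := List.mem_append.2 (Or.inr huq)
        exact hacyc (some u) (chain_transGen hp.1 this)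
  refine ⟨part1, fun T => ?_⟩
  have hirr : bas E (bas E T) = bas E T := by
    apply Finset.Subset.antisymm (Finset.filter_subset _ _)
    intro j hj
    obtain ⟨hjT, p, hp, honly⟩ := Finset.mem_filter.1 hj
    exact Finset.mem_filter.2 ⟨hj, p, hp,
      fun i hi hip => honly i (Finset.filter_subset _ _ hi) hip⟩
  exact ⟨bas E T, ⟨hirr, (part1 _ hirr T).1 rfl⟩,
    fun U' hU' => ((part1 U' hU'.1 T).2 hU'.2).symm⟩
end
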